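/- For every rational function R ∈ RatFunc ℂ there exists a unique rational function S ∈ RatFunc ℂ such that a_n(S) = a_{2n+1}(R) for all n ∈ ℤ. (This shows that the operation of extracting the odd-indexed Laurent coefficients maps rational functions to rational functions, so the map 𝔉 is well defined.) -/

import Mathlib

/-!
Write a Laurent series as `f = f₀(X²) + X f₁(X²)`; the odd-indexed coefficients of `f` are those
of `f₁ = bisect 1 f`. If `q f = p` with polynomials `p, q`, comparing both parts of the product
gives `(q₀² - X q₁²) f₁ = q₀ p₁ - q₁ p₀`, where the parts of polynomials are polynomials, and
`q₀² - X q₁² ≠ 0` because its two terms have orders of different parity. So `f₁` is rational;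
uniqueness is the injectivity of the Laurent expansion.
-/

/-- The `n`-th coefficient of the Laurent expansion at `0` of a rational function. -/
noncomputable def coeffL (R : RatFunc ℂ) (n : ℤ) : ℂ :=
  ((R : LaurentSeries ℂ)).coeff n

open HahnSeries
open scoped LaurentSeries Polynomial RatFunc

namespace LaurentSeries

variable {R : Type*}

section Semiring

variable [Semiring R]

noncomputable def bisect (k : ℤ) (f : R⸨X⸩) : R⸨X⸩ where
  coeff n := f.coeff (2 * n + k)
  isPWO_support' := Set.partiallyWellOrderedOn_iff_exists_lt.2 fun g hg => by
    obtain ⟨m, n, hmn, hle⟩ := f.isPWO_support.exists_lt (f := fun i => 2 * g i + k) hg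
    exact ⟨m, n, hmn, by omega⟩

@[simp]
theorem coeff_bisect (k : ℤ) (f : R⸨X⸩) (n : ℤ) : (bisect k f).coeff n = f.coeff (2 * n + k) :=
  rfl

noncomputable def expandTwo : R⸨X⸩ →+* R⸨X⸩ :=
  embDomainRingHom (AddMonoidHom.mulLeft 2) (mul_right_injective₀ two_ne_zero)
    (fun _ _ => by simp)

theorem coeff_expandTwo_two_mul (f : R⸨X⸩) (n : ℤ) : (expandTwo f).coeff (2 * n) = f.coeff n :=
  embDomain_coeff

theorem coeff_expandTwo_two_mul_add_one (f : R⸨X⸩) (n : ℤ) :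
    (expandTwo f).coeff (2 * n + 1) = 0 :=
  embDomain_of_notMem_range fun ⟨k, hk⟩ => by
    simp only [AddMonoidHom.coe_mulLeft, RelEmbedding.coe_mk, Function.Embedding.coeFn_mk] at hk
    omega

theorem expandTwo_single_one : expandTwo (single 1 1 : R⸨X⸩) = single 1 1 ^ 2 := by
  rw [single_pow]
  exact embDomain_single.trans (by simp)

theorem expandTwo_bisect_add_single_mul (f : R⸨X⸩) :
    expandTwo (bisect 0 f) + single 1 1 * expandTwo (bisect 1 f) = f := by
  ext m
  obtain ⟨n, rfl | rfl⟩ := Int.even_or_odd' m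
  · rw [coeff_add, coeff_single_mul, coeff_expandTwo_two_mul,
      show 2 * n - 1 = 2 * (n - 1) + 1 by ring, coeff_expandTwo_two_mul_add_one, mul_zero,
      add_zero, coeff_bisect, add_zero]
  · rw [coeff_add, coeff_single_mul, coeff_expandTwo_two_mul_add_one, add_sub_cancel_right,
      coeff_expandTwo_two_mul, one_mul, zero_add, coeff_bisect]

theorem bisect_zero_expandTwo_add_single_mul (a b : R⸨X⸩) :
    bisect 0 (expandTwo a + single 1 1 * expandTwo b) = a := by
  ext n
  rw [coeff_bisect, add_zero, coeff_add, coeff_single_mul, coeff_expandTwo_two_mul,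
    show 2 * n - 1 = 2 * (n - 1) + 1 by ring, coeff_expandTwo_two_mul_add_one, mul_zero, add_zero]

theorem bisect_one_expandTwo_add_single_mul (a b : R⸨X⸩) :
    bisect 1 (expandTwo a + single 1 1 * expandTwo b) = b := by
  ext n
  rw [coeff_bisect, coeff_add, coeff_single_mul, coeff_expandTwo_two_mul_add_one,
    add_sub_cancel_right, coeff_expandTwo_two_mul, one_mul, zero_add]

end Semiring

section CommSemiring

variable [CommSemiring R]

theorem mul_eq_expandTwo_add_single_mul_expandTwo (f g : R⸨X⸩) :
    f * g = expandTwo (bisect 0 f * bisect 0 g + single 1 1 * (bisect 1 f * bisect 1 g)) +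
      single 1 1 * expandTwo (bisect 1 f * bisect 0 g + bisect 0 f * bisect 1 g) := by
  conv_lhs => rw [← expandTwo_bisect_add_single_mul f, ← expandTwo_bisect_add_single_mul g]
  simp only [map_add, map_mul, expandTwo_single_one]
  ring

theorem bisect_zero_mul (f g : R⸨X⸩) :
    bisect 0 (f * g) = bisect 0 f * bisect 0 g + single 1 1 * (bisect 1 f * bisect 1 g) := by
  rw [mul_eq_expandTwo_add_single_mul_expandTwo, bisect_zero_expandTwo_add_single_mul]

theorem bisect_one_mul (f g : R⸨X⸩) :
    bisect 1 (f * g) = bisect 1 f * bisect 0 g + bisect 0 f * bisect 1 g := by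
  rw [mul_eq_expandTwo_add_single_mul_expandTwo, bisect_one_expandTwo_add_single_mul]

theorem coeff_algebraMap_polynomial (p : R[X]) (n : ℤ) :
    (algebraMap R[X] R⸨X⸩ p).coeff n = if n < 0 then 0 else p.coeff n.natAbs := by
  rw [Polynomial.algebraMap_hahnSeries_apply, PowerSeries.coeff_coe, Polynomial.coeff_coe]

theorem bisect_zero_algebraMap (p : R[X]) :
    bisect 0 (algebraMap R[X] R⸨X⸩ p) = algebraMap R[X] R⸨X⸩ (p.contract 2) := by
  ext n
  rw [coeff_bisect, coeff_algebraMap_polynomial, coeff_algebraMap_polynomial,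
    Polynomial.coeff_contract two_ne_zero]
  split_ifs <;> first | rfl | omega | (congr 1; omega)

theorem bisect_one_algebraMap (p : R[X]) :
    bisect 1 (algebraMap R[X] R⸨X⸩ p) = algebraMap R[X] R⸨X⸩ (p.divX.contract 2) := by
  ext n
  rw [coeff_bisect, coeff_algebraMap_polynomial, coeff_algebraMap_polynomial,
    Polynomial.coeff_contract two_ne_zero, Polynomial.coeff_divX]
  split_ifs <;> first | rfl | omega | (congr 1; omega)

end CommSemiring

section CommRing

variable [CommRing R]

/-- `expandTwo (bisectNorm q) = q(X) q(-X)`. -/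
noncomputable def bisectNorm (q : R⸨X⸩) : R⸨X⸩ :=
  bisect 0 q ^ 2 - single 1 1 * bisect 1 q ^ 2

theorem bisectNorm_mul_bisect_one (q f : R⸨X⸩) :
    bisectNorm q * bisect 1 f = bisect 0 q * bisect 1 (q * f) - bisect 1 q * bisect 0 (q * f) := by
  rw [bisectNorm, bisect_zero_mul, bisect_one_mul]
  ring

theorem bisectNorm_ne_zero [IsDomain R] {q : R⸨X⸩} (hq : q ≠ 0) : bisectNorm q ≠ 0 := by
  have hX : (single 1 1 : R⸨X⸩) ≠ 0 := single_ne_zero one_ne_zero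
  intro h
  have hsq : bisect 0 q ^ 2 = single 1 1 * bisect 1 q ^ 2 := sub_eq_zero.1 h
  obtain ha | ha := eq_or_ne (bisect 0 q) 0
  · have hb : bisect 1 q = 0 := by simpa [ha, hX] using hsq
    exact hq (by rw [← expandTwo_bisect_add_single_mul q, ha, hb]; simp)
  obtain hb | hb := eq_or_ne (bisect 1 q) 0
  · exact ha (by simpa [hb] using hsq)
  -- the two sides have orders of different parity
  have hord := congrArg HahnSeries.order hsq
  rw [order_pow, order_mul hX (pow_ne_zero 2 hb), order_pow, order_single one_ne_zero] at hord
  simp only [nsmul_eq_mul] at hord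
  omega

end CommRing

variable {K : Type*} [Field K]

theorem bisect_one_mem_fieldRange {f : K⸨X⸩} (hf : f ∈ (algebraMap (RatFunc K) K⸨X⸩).fieldRange) :
    bisect 1 f ∈ (algebraMap (RatFunc K) K⸨X⸩).fieldRange := by
  set F := (algebraMap (RatFunc K) K⸨X⸩).fieldRange
  have hpoly (p : K[X]) : algebraMap K[X] K⸨X⸩ p ∈ F :=
    ⟨algebraMap K[X] (RatFunc K) p, (IsScalarTower.algebraMap_apply _ _ _ _).symm⟩
  obtain ⟨r, rfl⟩ := hf
  set q := algebraMap K[X] K⸨X⸩ r.denom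
  have hq : q ≠ 0 :=
    (map_ne_zero_iff _ (Polynomial.algebraMap_hahnSeries_injective ℤ)).2 r.denom_ne_zero
  have hqr : q * algebraMap (RatFunc K) K⸨X⸩ r = algebraMap K[X] K⸨X⸩ r.num := by
    rw [← r.num_div_denom, RatFunc.algebraMap_apply_div, mul_div_cancel₀ _ hq, r.num_div_denom]
  have hbisect := eq_div_of_mul_eq (bisectNorm_ne_zero hq)
    ((mul_comm _ _).trans (bisectNorm_mul_bisect_one q (algebraMap (RatFunc K) K⸨X⸩ r)))
  rw [hbisect, hqr, bisectNorm, bisect_zero_algebraMap, bisect_one_algebraMap,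
    bisect_zero_algebraMap, bisect_one_algebraMap]
  have hX : (single 1 1 : K⸨X⸩) ∈ F := ⟨RatFunc.X, RatFunc.coe_X⟩
  exact F.div_mem (F.sub_mem (F.mul_mem (hpoly _) (hpoly _)) (F.mul_mem (hpoly _) (hpoly _)))
    (F.sub_mem (F.pow_mem (hpoly _) 2) (F.mul_mem hX (F.pow_mem (hpoly _) 2)))

end LaurentSeries

theorem stmt_0 (R : RatFunc ℂ) :
    ∃! S : RatFunc ℂ, ∀ n : ℤ, coeffL S n = coeffL R (2 * n + 1) := by
  obtain ⟨S, hS⟩ := LaurentSeries.bisect_one_mem_fieldRange ⟨R, rfl⟩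
  refine ⟨S, fun n => by rw [coeffL, hS]; rfl, fun T hT => ?_⟩
  refine (algebraMap (RatFunc ℂ) ℂ⸨X⸩).injective (HahnSeries.ext (funext fun n => ?_))
  rw [hS]
  exact hT n
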